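/- Let b : ℕ → ℝ and m : ℕ → ℝ define a birth-death chain (b r > 0, m r > 0 for all r), let α > 0 and let u : ℕ → ℝ be α-harmonic, not identically zero, and such that the family ((u r)²·m r)_{r∈ℕ} is summable (i.e. u ∈ ℓ²(ℕ,m)). Then m is summable and the family r ↦ (∑_{k>r} m k)/(b r) is summable. -/

import Mathlib

/-!
The flux `F r = b r * (u (r + 1) - u r)` of an `α`-harmonic function satisfies `F 0 = α m₀ u₀`
and `F (r + 1) = F r + α m (r + 1) u (r + 1)`. Since `u 0 = 0` forces `u = 0`, we may assume
`u 0 > 0` (replace `u` by `-u`); then `u` is positive and increasing and `F ≥ c := α m₀ u₀ > 0`.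
Monotonicity gives `m r ≤ u r² m r / u₀²` and `u (r + 1)² ∑_{k>r} m k ≤ ‖u‖²`, while
`1 / b r ≤ (u (r + 1) - u r) / c`; hence the `r`-th term of the second series is at most
`‖u‖² / c * (1 / u r - 1 / u (r + 1))`, a telescoping series.
-/

/-- A birth-death chain over `ℕ` with edge weights `b` (edge between `r` and `r+1`)
and measure `m`: a function `u` is `α`-harmonic if `(Δ + α) u = 0` where
`Δu(0) = (1/m 0) · b 0 · (u 0 − u 1)` and
`Δu(r) = (1/m r) · (b (r−1) · (u r − u (r−1)) + b r · (u r − u (r+1)))` for `r ≥ 1`. -/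
def IsAlphaHarmonicBD (b m : ℕ → ℝ) (α : ℝ) (u : ℕ → ℝ) : Prop :=
  (1 / m 0) * (b 0 * (u 0 - u 1)) + α * u 0 = 0 ∧
  ∀ r : ℕ, 1 ≤ r →
    (1 / m r) * (b (r - 1) * (u r - u (r - 1)) + b r * (u r - u (r + 1))) + α * u r = 0

section Comparison

variable {b m u : ℕ → ℝ} {c : ℝ}

lemma summable_of_summable_sq_mul (hu : Monotone u) (hu0 : 0 < u 0) (hm : ∀ r, 0 ≤ m r)
    (hsum : Summable fun r => u r ^ 2 * m r) : Summable m := by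
  refine (hsum.div_const (u 0 ^ 2)).of_nonneg_of_le hm fun r => ?_
  rw [le_div_iff₀ (by positivity), mul_comm]
  gcongr
  · exact hm r
  · exact hu (Nat.zero_le r)

lemma sq_mul_tsum_tail_le (hu : Monotone u) (hu0 : 0 < u 0) (hm : ∀ r, 0 ≤ m r)
    (hsum : Summable fun r => u r ^ 2 * m r) (n : ℕ) :
    u n ^ 2 * ∑' k, m (n + k) ≤ ∑' r, u r ^ 2 * m r := by
  have hun : 0 ≤ u n := hu0.le.trans (hu (Nat.zero_le n))
  calc u n ^ 2 * ∑' k, m (n + k) = ∑' k, u n ^ 2 * m (n + k) := tsum_mul_left.symm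
    _ ≤ ∑' k, u (n + k) ^ 2 * m (n + k) := by
      refine Summable.tsum_le_tsum (fun k => ?_)
        (((summable_of_summable_sq_mul hu hu0 hm hsum).comp_injective
          (add_right_injective n)).mul_left _)
        (hsum.comp_injective (add_right_injective n))
      gcongr
      · exact hm _
      · exact hu (Nat.le_add_right n k)
    _ ≤ ∑' r, u r ^ 2 * m r :=
      tsum_comp_le_tsum_of_inj hsum (fun r => by have := hm r; positivity) (add_right_injective n)

lemma summable_inv_sub_inv_succ (hu : Monotone u) (hpos : ∀ r, 0 < u r) :
    Summable fun r => (u r)⁻¹ - (u (r + 1))⁻¹ := by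
  refine summable_of_sum_range_le (c := (u 0)⁻¹) (fun r => ?_) fun n => ?_
  · have := inv_anti₀ (hpos r) (hu (Nat.le_succ r))
    linarith
  · rw [Finset.sum_range_sub']
    linarith [inv_pos.2 (hpos n)]

lemma strictMono_of_le_flux (hb : ∀ r, 0 < b r) (hc : 0 < c)
    (hflux : ∀ r, c ≤ b r * (u (r + 1) - u r)) : StrictMono u :=
  strictMono_nat_of_lt_succ fun r =>
    sub_pos.1 (pos_of_mul_pos_right (hc.trans_le (hflux r)) (hb r).le)

theorem summable_tail_div_of_le_flux (hb : ∀ r, 0 < b r) (hc : 0 < c)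
    (hflux : ∀ r, c ≤ b r * (u (r + 1) - u r)) (hu0 : 0 < u 0) (hm : ∀ r, 0 ≤ m r)
    (hsum : Summable fun r => u r ^ 2 * m r) :
    Summable fun r => (∑' k, m (r + 1 + k)) / b r := by
  have hmono := (strictMono_of_le_flux hb hc hflux).monotone
  have hpos : ∀ r, 0 < u r := fun r => hu0.trans_le (hmono (Nat.zero_le r))
  have htail : ∀ r, 0 ≤ ∑' k, m (r + 1 + k) := fun r => tsum_nonneg fun k => hm _
  set C := ∑' r, u r ^ 2 * m r
  have hC : 0 ≤ C := tsum_nonneg fun r => mul_nonneg (sq_nonneg _) (hm r)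
  refine ((summable_inv_sub_inv_succ hmono hpos).mul_left (C / c)).of_nonneg_of_le
    (fun r => div_nonneg (htail r) (hb r).le) fun r => ?_
  have hu1 := hpos (r + 1)
  have htail_le : ∑' k, m (r + 1 + k) ≤ C / u (r + 1) ^ 2 := by
    rw [le_div_iff₀ (by positivity), mul_comm]
    exact sq_mul_tsum_tail_le hmono hu0 hm hsum (r + 1)
  have hinv : (b r)⁻¹ ≤ (u (r + 1) - u r) / c := by
    rw [inv_eq_one_div, div_le_div_iff₀ (hb r) hc, one_mul]
    exact (hflux r).trans_eq (mul_comm _ _)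
  calc (∑' k, m (r + 1 + k)) / b r = (∑' k, m (r + 1 + k)) * (b r)⁻¹ := div_eq_mul_inv _ _
    _ ≤ C / u (r + 1) ^ 2 * ((u (r + 1) - u r) / c) := by
      have := hb r
      have := htail r
      gcongr
    _ = C / c * ((u (r + 1) - u r) / (u (r + 1) * u (r + 1))) := by ring
    _ ≤ C / c * ((u (r + 1) - u r) / (u r * u (r + 1))) := by
      have := hpos r
      have := hmono (Nat.le_succ r)
      gcongr
    _ = C / c * ((u r)⁻¹ - (u (r + 1))⁻¹) := by
      rw [inv_sub_inv (hpos r).ne' hu1.ne']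

end Comparison

namespace IsAlphaHarmonicBD

variable {b m : ℕ → ℝ} {α : ℝ} {u : ℕ → ℝ}

lemma flux_zero (hu : IsAlphaHarmonicBD b m α u) (hm : m 0 ≠ 0) :
    b 0 * (u 1 - u 0) = α * m 0 * u 0 := by
  have h := hu.1
  field_simp at h
  linear_combination -h

lemma flux_succ (hu : IsAlphaHarmonicBD b m α u) {r : ℕ} (hm : m (r + 1) ≠ 0) :
    b (r + 1) * (u (r + 2) - u (r + 1)) =
      b r * (u (r + 1) - u r) + α * m (r + 1) * u (r + 1) := by
  have h := hu.2 (r + 1) r.succ_pos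
  simp only [Nat.add_sub_cancel] at h
  field_simp at h
  linear_combination -h

lemma neg (hu : IsAlphaHarmonicBD b m α u) : IsAlphaHarmonicBD b m α (-u) := by
  refine ⟨?_, fun r hr => ?_⟩
  · simp only [Pi.neg_apply]
    linear_combination -hu.1
  · simp only [Pi.neg_apply]
    linear_combination -hu.2 r hr

lemma eq_zero_of_apply_zero (hu : IsAlphaHarmonicBD b m α u) (hb : ∀ r, b r ≠ 0)
    (hm : ∀ r, m r ≠ 0) (h0 : u 0 = 0) : u = 0 := by
  have key : ∀ r, u r = 0 ∧ u (r + 1) = 0 := by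
    intro r
    induction r with
    | zero =>
      refine ⟨h0, ?_⟩
      have := hu.flux_zero (hm 0)
      rw [h0, mul_zero, sub_zero] at this
      exact (mul_eq_zero.1 this).resolve_left (hb 0)
    | succ r ih =>
      refine ⟨ih.2, ?_⟩
      have := hu.flux_succ (hm (r + 1))
      rw [ih.1, ih.2, sub_zero, sub_zero, mul_zero, mul_zero, add_zero] at this
      exact (mul_eq_zero.1 this).resolve_left (hb (r + 1))
  exact funext fun r => (key r).1

lemma le_flux (hu : IsAlphaHarmonicBD b m α u) (hb : ∀ r, 0 < b r) (hm : ∀ r, 0 < m r)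
    (hα : 0 < α) (h0 : 0 < u 0) (r : ℕ) :
    α * m 0 * u 0 ≤ b r * (u (r + 1) - u r) := by
  have hc : 0 < α * m 0 * u 0 := by have := hm 0; positivity
  have key : ∀ n, α * m 0 * u 0 ≤ b n * (u (n + 1) - u n) ∧ 0 < u n := by
    intro n
    induction n with
    | zero => exact ⟨(hu.flux_zero (hm 0).ne').ge, h0⟩
    | succ r ih =>
      obtain ⟨hflux, hur⟩ := ih
      have hstep : 0 < u (r + 1) - u r :=
        pos_of_mul_pos_right (hc.trans_le hflux) (hb r).le
      have hur1 : 0 < u (r + 1) := by linarith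
      have hgain : 0 < α * m (r + 1) * u (r + 1) := by have := hm (r + 1); positivity
      refine ⟨?_, hur1⟩
      rw [hu.flux_succ (hm (r + 1)).ne']
      linarith
  exact (key r).1

end IsAlphaHarmonicBD

theorem bd_harmonic_ell2_nontrivial (b m : ℕ → ℝ) (hb : ∀ r, 0 < b r) (hm : ∀ r, 0 < m r)
    (α : ℝ) (hα : 0 < α) (u : ℕ → ℝ) (hu : IsAlphaHarmonicBD b m α u)
    (hne : u ≠ 0) (hsum : Summable (fun r : ℕ => (u r) ^ 2 * m r)) :
    Summable m ∧ Summable (fun r : ℕ => (∑' k : ℕ, m (r + 1 + k)) / b r) := by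
  wlog h0 : 0 < u 0 generalizing u
  · have hneg : u 0 < 0 := (not_lt.1 h0).lt_of_ne fun h =>
      hne (hu.eq_zero_of_apply_zero (fun r => (hb r).ne') (fun r => (hm r).ne') h)
    exact this (-u) hu.neg (neg_ne_zero.2 hne) (by simpa using hsum) (by simpa using hneg)
  have hc : 0 < α * m 0 * u 0 := by have := hm 0; positivity
  have hflux := hu.le_flux hb hm hα h0
  have hm' : ∀ r, 0 ≤ m r := fun r => (hm r).le
  exact ⟨summable_of_summable_sq_mul (strictMono_of_le_flux hb hc hflux).monotone h0 hm' hsum,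
    summable_tail_div_of_le_flux hb hc hflux h0 hm' hsum⟩
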